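/- arXiv:2109.06752 — 2 statements merged into one kernel-verified Lean document; each statement's English description precedes it below -/
import Mathlib

section
/- (Discrete Ham-Sandwich theorem in the plane) For any two finite point sets P₁, P₂ in ℝ², there exists a line ℓ such that each open half-plane determined by ℓ contains at most ⌊|P₁|/2⌋ points of P₁ and at most ⌊|P₂|/2⌋ points of P₂. -/
/-!
For a direction `θ` let `m_P(θ)` be the median of the projections `cos θ * p.1 + sin θ * p.2`,
`p ∈ P`; the line on which this projection equals `m_P(θ)` leaves at most `⌊|P|/2⌋` points of `P`
on each open side. Taking the median as the midpoint of the two middle order statistics, each of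
which is a min-max of continuous functions, makes `m_P` continuous, and reversing the direction
gives `m_P(π) = -m_P(0)`. Hence `m_{P₁} - m_{P₂}` changes sign on `[0, π]`, so it vanishes at some
`θ`, where the bisecting lines of `P₁` and `P₂` coincide.
-/

open Finset Real

namespace Finset

variable {ι : Type*}

lemma nonempty_of_mem_powersetCard {s T : Finset ι} {k : ℕ} (hk : 0 < k)
    (hT : T ∈ s.powersetCard k) : T.Nonempty :=
  card_pos.1 ((mem_powersetCard.1 hT).2 ▸ hk)

variable (s : Finset ι)

/-- The `k`-th smallest value of `f` on `s`, counted with multiplicity, written as a min-max over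
the `k`-subsets of `s` so that it is visibly continuous in `f`. It is a junk `0` unless
`0 < k ≤ #s`. -/
noncomputable def orderStat (k : ℕ) (f : ι → ℝ) : ℝ :=
  if h : 0 < k ∧ k ≤ #s then
    (s.powersetCard k).attach.inf' (attach_nonempty_iff.2 (powersetCard_nonempty.2 h.2))
      fun T => T.1.sup' (nonempty_of_mem_powersetCard h.1 T.2) f
  else 0

/-- `-orderStat s k (-f)` is the `k`-th largest value, so this is the midpoint of the two middle
values of `f` on `s`. -/
noncomputable def median (f : ι → ℝ) : ℝ :=
  (s.orderStat ((#s + 1) / 2) f - s.orderStat ((#s + 1) / 2) (-f)) / 2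

variable {s} {k : ℕ}

lemma exists_card_eq_forall_le_orderStat (hk₀ : 0 < k) (hks : k ≤ #s) (f : ι → ℝ) :
    ∃ T ⊆ s, #T = k ∧ ∀ i ∈ T, f i ≤ s.orderStat k f := by
  rw [orderStat, dif_pos ⟨hk₀, hks⟩]
  obtain ⟨T, -, hT⟩ := exists_mem_eq_inf' (attach_nonempty_iff.2 (powersetCard_nonempty.2 hks))
    fun T : s.powersetCard k => T.1.sup' (nonempty_of_mem_powersetCard hk₀ T.2) f
  rw [hT]
  exact ⟨T, (mem_powersetCard.1 T.2).1, (mem_powersetCard.1 T.2).2, fun i hi => le_sup' f hi⟩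

lemma exists_mem_orderStat_le {T : Finset ι} (hk₀ : 0 < k) (hTs : T ⊆ s) (hTk : #T = k)
    (f : ι → ℝ) : ∃ i ∈ T, s.orderStat k f ≤ f i := by
  have hks : k ≤ #s := hTk ▸ card_le_card hTs
  rw [orderStat, dif_pos ⟨hk₀, hks⟩]
  have hT : T ∈ s.powersetCard k := mem_powersetCard.2 ⟨hTs, hTk⟩
  obtain ⟨i, hi, he⟩ := exists_mem_eq_sup' (card_pos.1 (hTk ▸ hk₀)) f
  exact ⟨i, hi, he ▸ inf'_le _ (mem_attach _ ⟨T, hT⟩)⟩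

lemma card_filter_orderStat_lt (hk₀ : 0 < k) (hks : k ≤ #s) (f : ι → ℝ) :
    #{i ∈ s | s.orderStat k f < f i} ≤ #s - k := by
  classical
  obtain ⟨T, hTs, hTk, hT⟩ := exists_card_eq_forall_le_orderStat hk₀ hks f
  calc #{i ∈ s | s.orderStat k f < f i} ≤ #(s \ T) :=
        card_le_card fun i hi => by
          rw [mem_filter] at hi
          exact mem_sdiff.2 ⟨hi.1, fun hiT => (hT i hiT).not_gt hi.2⟩
    _ = #s - k := by rw [card_sdiff_of_subset hTs, hTk]

lemma card_filter_lt_orderStat (hk₀ : 0 < k) (f : ι → ℝ) :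
    #{i ∈ s | f i < s.orderStat k f} < k := by
  by_contra! hk
  obtain ⟨T, hT, hTk⟩ := exists_subset_card_eq hk
  obtain ⟨i, hi, hle⟩ := exists_mem_orderStat_le hk₀ (hT.trans (filter_subset _ _)) hTk f
  exact hle.not_gt (mem_filter.1 (hT hi)).2

lemma orderStat_add_orderStat_neg_nonpos (hk₀ : 0 < k) (hks : 2 * k ≤ #s + 1) (f : ι → ℝ) :
    s.orderStat k f + s.orderStat k (-f) ≤ 0 := by
  classical
  by_contra! h
  have hcover :
      s ⊆ {i ∈ s | f i < s.orderStat k f} ∪ {i ∈ s | (-f) i < s.orderStat k (-f)} := by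
    intro i hi
    simp only [mem_union, mem_filter, Pi.neg_apply]
    by_contra! hi'
    linarith [hi'.1 hi, hi'.2 hi]
  have := (card_le_card hcover).trans (card_union_le _ _)
  have := card_filter_lt_orderStat (s := s) hk₀ f
  have := card_filter_lt_orderStat (s := s) hk₀ (-f)
  omega

lemma continuous_orderStat {X : Type*} [TopologicalSpace X] {f : X → ι → ℝ}
    (hf : ∀ i, Continuous fun x => f x i) : Continuous fun x => s.orderStat k (f x) := by
  unfold orderStat
  split_ifs
  · exact Continuous.finset_inf'_apply _ fun T _ => Continuous.finset_sup'_apply _ fun i _ => hf i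
  · exact continuous_const

lemma median_neg (f : ι → ℝ) : s.median (-f) = -s.median f := by
  simp only [median, neg_neg]
  ring

lemma card_filter_median_lt (f : ι → ℝ) : #{i ∈ s | s.median f < f i} ≤ #s / 2 := by
  rcases s.eq_empty_or_nonempty with rfl | hs
  · simp
  have hs' := card_pos.2 hs
  have hk₀ : 0 < (#s + 1) / 2 := by omega
  have hmid := orderStat_add_orderStat_neg_nonpos (s := s) hk₀ (by omega) f
  calc #{i ∈ s | s.median f < f i} ≤ #{i ∈ s | s.orderStat ((#s + 1) / 2) f < f i} :=
        card_le_card <| monotone_filter_right _ fun i _ hi => by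
          rw [median] at hi
          linarith
    _ ≤ #s - (#s + 1) / 2 := card_filter_orderStat_lt hk₀ (by omega) f
    _ = #s / 2 := by omega

lemma card_filter_lt_median (f : ι → ℝ) : #{i ∈ s | f i < s.median f} ≤ #s / 2 := by
  simpa [median_neg] using card_filter_median_lt (-f)

lemma continuous_median {X : Type*} [TopologicalSpace X] {f : X → ι → ℝ}
    (hf : ∀ i, Continuous fun x => f x i) : Continuous fun x => s.median (f x) :=
  ((continuous_orderStat hf).sub (continuous_orderStat fun i => (hf i).neg)).div_const 2

end Finset

lemma exists_eq_zero_of_map_eq_neg {X : Type*} [TopologicalSpace X] [PreconnectedSpace X]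
    {g : X → ℝ} (hg : Continuous g) {a b : X} (h : g b = -g a) : ∃ x, g x = 0 := by
  rcases le_total (g a) 0 with ha | ha
  · exact intermediate_value_univ a b hg ⟨ha, by linarith⟩
  · exact intermediate_value_univ b a hg ⟨by linarith, ha⟩

lemma ncard_open_halfPlanes_le_of_median_eq (P : Finset (ℝ × ℝ)) {a b c : ℝ}
    (hc : P.median (fun q => a * q.1 + b * q.2) = -c) :
    {q ∈ (P : Set (ℝ × ℝ)) | 0 < a * q.1 + b * q.2 + c}.ncard ≤ #P / 2 ∧
      {q ∈ (P : Set (ℝ × ℝ)) | a * q.1 + b * q.2 + c < 0}.ncard ≤ #P / 2 := by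
  constructor
  · refine ((Set.ncard_le_ncard fun q hq => ?_).trans_eq (Set.ncard_coe_finset _)).trans
      (card_filter_median_lt fun q => a * q.1 + b * q.2)
    simp only [Set.mem_ofPred_eq, coe_filter] at hq ⊢
    exact ⟨hq.1, by linarith [hq.2]⟩
  · refine ((Set.ncard_le_ncard fun q hq => ?_).trans_eq (Set.ncard_coe_finset _)).trans
      (card_filter_lt_median fun q => a * q.1 + b * q.2)
    simp only [Set.mem_ofPred_eq, coe_filter] at hq ⊢
    exact ⟨hq.1, by linarith [hq.2]⟩

/-- Discrete Ham-Sandwich theorem in the plane: for any two finite point sets `P₁, P₂`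
there is a line such that each open half-plane contains at most `⌊|Pᵢ|/2⌋` points of `Pᵢ`. -/
theorem discrete_ham_sandwich (P₁ P₂ : Finset (ℝ × ℝ)) :
    ∃ a b c : ℝ, (a, b) ≠ (0, 0) ∧
      {q ∈ (P₁ : Set (ℝ × ℝ)) | 0 < a * q.1 + b * q.2 + c}.ncard ≤ P₁.card / 2 ∧
      {q ∈ (P₁ : Set (ℝ × ℝ)) | a * q.1 + b * q.2 + c < 0}.ncard ≤ P₁.card / 2 ∧
      {q ∈ (P₂ : Set (ℝ × ℝ)) | 0 < a * q.1 + b * q.2 + c}.ncard ≤ P₂.card / 2 ∧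
      {q ∈ (P₂ : Set (ℝ × ℝ)) | a * q.1 + b * q.2 + c < 0}.ncard ≤ P₂.card / 2 := by
  set ℓ : ℝ → ℝ × ℝ → ℝ := fun θ q => cos θ * q.1 + sin θ * q.2
  have hℓ : ∀ q, Continuous fun θ => ℓ θ q := fun q => by fun_prop
  have hℓπ : ℓ π = -ℓ 0 := by
    funext q
    simp [ℓ]
  obtain ⟨θ, hθ⟩ := exists_eq_zero_of_map_eq_neg (g := fun θ => P₁.median (ℓ θ) - P₂.median (ℓ θ))
    ((continuous_median hℓ).sub (continuous_median hℓ)) (a := 0) (b := π)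
    (by simp only [hℓπ, median_neg]; ring)
  have hdir : (cos θ, sin θ) ≠ (0, 0) := fun h => by
    simp only [Prod.mk.injEq] at h
    simpa [h.1, h.2] using sin_sq_add_cos_sq θ
  obtain ⟨h₁, h₁'⟩ :=
    ncard_open_halfPlanes_le_of_median_eq P₁ (c := -P₁.median (ℓ θ)) (neg_neg _).symm
  obtain ⟨h₂, h₂'⟩ := ncard_open_halfPlanes_le_of_median_eq P₂ (c := -P₁.median (ℓ θ))
    (by linarith)
  exact ⟨cos θ, sin θ, _, hdir, h₁, h₁', h₂, h₂'⟩
end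

section
/- (Reduction of even sizes to odd sizes) Suppose every family of 2n finite point sets in general position, each of odd cardinality, admits a bisecting arrangement of n lines. Then every family of 2n finite point sets in general position (arbitrary cardinalities) admits a bisecting arrangement of n lines. -/
/-- The positive region of an oriented line arrangement. -/
def Rpos (n : ℕ) (a b c : Fin n → ℝ) : Set (ℝ × ℝ) :=
  {p | (∀ i, a i * p.1 + b i * p.2 + c i ≠ 0) ∧
    Even (Set.ncard {i | 0 < a i * p.1 + b i * p.2 + c i})}

/-- The negative region of an oriented line arrangement. -/
def Rneg (n : ℕ) (a b c : Fin n → ℝ) : Set (ℝ × ℝ) :=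
  {p | (∀ i, a i * p.1 + b i * p.2 + c i ≠ 0) ∧
    Odd (Set.ncard {i | 0 < a i * p.1 + b i * p.2 + c i})}

/-- General position: no three distinct points of the union of the family are collinear. -/
def GenPos {m : ℕ} (P : Fin m → Finset (ℝ × ℝ)) : Prop :=
  ∀ p q r : ℝ × ℝ, (∃ i, p ∈ P i) → (∃ i, q ∈ P i) → (∃ i, r ∈ P i) →
    p ≠ q → p ≠ r → q ≠ r → ¬ Collinear ℝ ({p, q, r} : Set (ℝ × ℝ))

/-- An arrangement of `n` lines bisects the family `P`. -/
def BisectsFamily (n : ℕ) {m : ℕ} (P : Fin m → Finset (ℝ × ℝ)) : Prop :=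
  ∃ a b c : Fin n → ℝ, (∀ j, (a j, b j) ≠ (0, 0)) ∧ ∀ i,
    ((P i : Set (ℝ × ℝ)) ∩ Rpos n a b c).ncard ≤ (P i).card / 2 ∧
    ((P i : Set (ℝ × ℝ)) ∩ Rneg n a b c).ncard ≤ (P i).card / 2

private lemma ncard_inter_insert_le (e : ℝ × ℝ) (s R : Set (ℝ × ℝ)) (hs : s.Finite) :
    (insert e s ∩ R).ncard ≤ (s ∩ R).ncard + 1 := by
  calc (insert e s ∩ R).ncard ≤ (insert e (s ∩ R)).ncard := by
        apply Set.ncard_le_ncard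
        · rintro x ⟨hx, hxR⟩
          rcases hx with rfl | hx
          · exact Set.mem_insert _ _
          · exact Set.mem_insert_of_mem _ ⟨hx, hxR⟩
        · exact ((hs.inter_of_left R).insert e)
    _ ≤ (s ∩ R).ncard + 1 := Set.ncard_insert_le _ _

/-- Reduction of even sizes to odd sizes: if every family of `2n` odd-size point sets in
general position admits a bisecting arrangement of `n` lines, then so does every family of
`2n` point sets in general position of arbitrary cardinalities. -/
theorem even_to_odd_reduction
    (hodd : ∀ (n : ℕ) (P : Fin (2 * n) → Finset (ℝ × ℝ)),
      GenPos P → (∀ i, Odd (P i).card) → BisectsFamily n P) :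
    ∀ (n : ℕ) (P : Fin (2 * n) → Finset (ℝ × ℝ)),
      GenPos P → BisectsFamily n P := by
  intro n P hgen
  classical
  by_cases hne : ∃ i x, x ∈ P i
  · obtain ⟨i0, p0, hp0⟩ := hne
    set Q : Fin (2 * n) → Finset (ℝ × ℝ) := fun i =>
      if Odd (P i).card then P i
      else if h2 : (P i).Nonempty then (P i).erase h2.choose
      else {p0} with hQ
    have hQsub : ∀ i x, x ∈ Q i → ∃ j, x ∈ P j := by
      intro i x hx
      simp only [hQ] at hx
      split_ifs at hx with h1 h2
      · exact ⟨i, hx⟩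
      · exact ⟨i, Finset.mem_of_mem_erase hx⟩
      · simp only [Finset.mem_singleton] at hx
        exact ⟨i0, hx ▸ hp0⟩
    have hQgen : GenPos Q := by
      intro p q r hp hq hr
      apply hgen
      · obtain ⟨i, hi⟩ := hp; exact hQsub i p hi
      · obtain ⟨i, hi⟩ := hq; exact hQsub i q hi
      · obtain ⟨i, hi⟩ := hr; exact hQsub i r hi
    have hQodd : ∀ i, Odd (Q i).card := by
      intro i
      simp only [hQ]
      split_ifs with h1 h2
      · exact h1
      · rw [Finset.card_erase_of_mem h2.choose_spec]
        have hpos : 0 < (P i).card := Finset.card_pos.mpr h2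
        rw [Nat.not_odd_iff_even] at h1
        obtain ⟨t, ht⟩ := h1
        refine ⟨t - 1, by omega⟩
      · simp
    obtain ⟨a, b, c, hab, hbis⟩ := hodd n Q hQgen hQodd
    refine ⟨a, b, c, hab, fun i => ?_⟩
    obtain ⟨h1, h2⟩ := hbis i
    by_cases ho : Odd (P i).card
    · simp only [hQ, if_pos ho] at h1 h2
      exact ⟨h1, h2⟩
    · by_cases hn : (P i).Nonempty
      · simp only [hQ, if_neg ho, dif_pos hn] at h1 h2
        set e := hn.choose with he
        have hem : e ∈ P i := hn.choose_spec
        have hins : (P i : Set (ℝ × ℝ)) = insert e ((P i).erase e : Set (ℝ × ℝ)) := by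
          rw [← Finset.coe_insert, Finset.insert_erase hem]
        have hcard : ((P i).erase e).card = (P i).card - 1 :=
          Finset.card_erase_of_mem hem
        have hpos : 0 < (P i).card := Finset.card_pos.mpr hn
        rw [Nat.not_odd_iff_even] at ho
        obtain ⟨t, ht⟩ := ho
        have key : ∀ R : Set (ℝ × ℝ),
            (((P i).erase e : Set (ℝ × ℝ)) ∩ R).ncard ≤ ((P i).erase e).card / 2 →
            ((P i : Set (ℝ × ℝ)) ∩ R).ncard ≤ (P i).card / 2 := by
          intro R hR
          rw [hins]
          have := ncard_inter_insert_le e ((P i).erase e : Set (ℝ × ℝ)) R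
            (Finset.finite_toSet _)
          omega
        exact ⟨key _ h1, key _ h2⟩
      · rw [Finset.not_nonempty_iff_eq_empty] at hn
        rw [hn]
        simp
  · push_neg at hne
    refine ⟨fun _ => 1, fun _ => 0, fun _ => 0, fun _ => by simp, fun i => ?_⟩
    have : (P i : Set (ℝ × ℝ)) = ∅ := by
      ext x; simp [hne i x]
    simp [this]
end
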